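/- arXiv:2305.15297 — 3 statements merged into one kernel-verified Lean document; each statement's English description precedes it below -/
import Mathlib

section
/- There is an absolute constant c such that for every prime power q, there exists an infinite increasing sequence of dimensions k_i for which there exist strong blocking sets of size at most c·q·k_i in PG(k_i - 1, q). -/
open Projectivization

/-- The span of a set of projective points. -/
def projSpan {K V : Type*} [DivisionRing K] [AddCommGroup V] [Module K V]
    (M : Set (Projectivization K V)) : Submodule K V :=
  ⨆ P ∈ M, P.submodule

/-- A set of projective points is a strong blocking set if for every hyperplane `H`,
the points of `M` lying on `H` span `H`. -/
def IsStrongBlockingSet {K V : Type*} [DivisionRing K] [AddCommGroup V] [Module K V]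
    (M : Set (Projectivization K V)) : Prop :=
  ∀ H : Submodule K V, Module.finrank K H + 1 = Module.finrank K V →
    projSpan {P | P ∈ M ∧ P.submodule ≤ H} = H

open Module Submodule LinearMap Finset

/-- Separation: a dual functional vanishing on `D` but not at `x`. -/
lemma exists_dual_sep {K V : Type*} [Field K] [AddCommGroup V] [Module K V]
    [FiniteDimensional K V] (D : Submodule K V) {x : V} (hx : x ∉ D) :
    ∃ ψ : Module.Dual K V, D ≤ LinearMap.ker ψ ∧ ψ x ≠ 0 := by
  have hx0 : D.mkQ x ≠ 0 := by
    simpa [Submodule.Quotient.mk_eq_zero] using hx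
  obtain ⟨g, hg⟩ : ∃ g : Module.Dual K (V ⧸ D), g (D.mkQ x) ≠ 0 := by
    by_contra h
    push_neg at h
    exact hx0 ((Module.forall_dual_apply_eq_zero_iff K _).mp h)
  refine ⟨g ∘ₗ D.mkQ, fun y hy => ?_, hg⟩
  simp [LinearMap.mem_ker, (Submodule.Quotient.mk_eq_zero D).mpr hy]

/-- A hyperplane is the kernel of a nonzero functional. -/
lemma hyperplane_ker {K V : Type*} [Field K] [AddCommGroup V] [Module K V]
    [FiniteDimensional K V] {H : Submodule K V}
    (hH : Module.finrank K H + 1 = Module.finrank K V) :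
    ∃ φ : Module.Dual K V, LinearMap.ker φ = H ∧ φ ≠ 0 := by
  have hHt : H ≠ ⊤ := by
    intro h
    rw [h, finrank_top] at hH
    omega
  obtain ⟨x, -, hx⟩ := SetLike.exists_of_lt ((lt_top_iff_ne_top (a := H)).mpr hHt)
  obtain ⟨φ, hle, hφx⟩ := exists_dual_sep H (x := x) hx
  have hkt : LinearMap.ker φ < ⊤ := lt_top_iff_ne_top.mpr (fun h => hφx (by
    have : x ∈ LinearMap.ker φ := h ▸ Submodule.mem_top
    exact this))
  have h1 : Module.finrank K (LinearMap.ker φ) < Module.finrank K V :=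
    Submodule.finrank_lt hkt.ne
  have h2 : Module.finrank K (LinearMap.ker φ) ≤ Module.finrank K H := by omega
  have := Submodule.eq_of_le_of_finrank_le hle h2
  exact ⟨φ, this.symm, fun h => hφx (by simp [h])⟩


/-- Counting bad line-generating pairs for a fixed pair of functionals. -/
lemma countBad {K V : Type*} [Field K] [Fintype K] [AddCommGroup V] [Module K V]
    [Finite V] [FiniteDimensional K V] {j : ℕ}
    (hdim : Module.finrank K V = j + 2)
    (φ ψ : Module.Dual K V) (hφ : φ ≠ 0) (hψ : ¬ LinearMap.ker φ ≤ LinearMap.ker ψ) :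
    Nat.card {ab : V × V //
        Submodule.span K {ab.1, ab.2} ⊓ LinearMap.ker φ ≤ LinearMap.ker ψ}
      ≤ Fintype.card K ^ (2*j+3) := by
  classical
  set q := Fintype.card K with hq
  have hq1 : 1 ≤ q := Fintype.card_pos
  set U : Submodule K V := LinearMap.ker φ ⊓ LinearMap.ker ψ with hU
  -- dimension bounds
  have hker_lt : LinearMap.ker φ < ⊤ := by
    rcases (DFunLike.ne_iff.mp hφ) with ⟨y, hy⟩
    refine lt_top_iff_ne_top.mpr (fun h => hy ?_)
    have : y ∈ LinearMap.ker φ := h ▸ Submodule.mem_top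
    simpa using this
  have hker_rank : Module.finrank K (LinearMap.ker φ) ≤ j + 1 := by
    have := Submodule.finrank_lt hker_lt.ne
    omega
  have hUlt : U < LinearMap.ker φ := by
    refine lt_of_le_of_ne inf_le_left (fun h => hψ ?_)
    rw [← h]; exact inf_le_right
  have hU_rank : Module.finrank K U ≤ j := by
    have h1 := Submodule.finrank_lt_finrank_of_lt hUlt
    omega
  -- cardinalities of submodules
  have cardsub : ∀ S : Submodule K V, Nat.card S = q ^ Module.finrank K S := by
    intro S
    haveI : Fintype S := Fintype.ofFinite _
    rw [Nat.card_eq_fintype_card]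
    exact card_eq_pow_finrank
  -- x₀ with φ x₀ = 1
  obtain ⟨y, hy⟩ := DFunLike.ne_iff.mp hφ
  have hy' : φ y ≠ 0 := by simpa using hy
  set x₀ : V := (φ y)⁻¹ • y with hx₀
  have hφx₀ : φ x₀ = 1 := by
    simp [hx₀, inv_mul_cancel₀ hy']
  -- membership helpers
  have memspan1 : ∀ a b : V, a ∈ Submodule.span K {a, b} :=
    fun a b => Submodule.subset_span (Set.mem_insert a {b})
  have memspan2 : ∀ a b : V, b ∈ Submodule.span K {a, b} :=
    fun a b => Submodule.subset_span (Set.mem_insert_of_mem a rfl)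
  have memU1 : ∀ a b : V, (Submodule.span K {a, b} ⊓ LinearMap.ker φ ≤ LinearMap.ker ψ) →
      φ a = 0 → φ b = 0 → a ∈ U ∧ b ∈ U := by
    intro a b hbad ha hb
    have h1 : a ∈ Submodule.span K {a,b} ⊓ LinearMap.ker φ :=
      ⟨memspan1 a b, by simpa [LinearMap.mem_ker] using ha⟩
    have h2 : b ∈ Submodule.span K {a,b} ⊓ LinearMap.ker φ :=
      ⟨memspan2 a b, by simpa [LinearMap.mem_ker] using hb⟩
    exact ⟨⟨h1.2, hbad h1⟩, ⟨h2.2, hbad h2⟩⟩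
  have memW : ∀ a b : V, (Submodule.span K {a, b} ⊓ LinearMap.ker φ ≤ LinearMap.ker ψ) →
      (φ b • a - φ a • b) ∈ U := by
    intro a b hbad
    have hmem : φ b • a - φ a • b ∈ Submodule.span K {a,b} ⊓ LinearMap.ker φ := by
      constructor
      · exact sub_mem (Submodule.smul_mem _ _ (memspan1 a b))
          (Submodule.smul_mem _ _ (memspan2 a b))
      · simp [LinearMap.mem_ker, mul_comm]
    exact ⟨hmem.2, hbad hmem⟩
  have memker : ∀ a : V, a - φ a • x₀ ∈ LinearMap.ker φ := by
    intro a
    simp [LinearMap.mem_ker, hφx₀]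
  -- the injection
  set F : {ab : V × V //
      Submodule.span K {ab.1, ab.2} ⊓ LinearMap.ker φ ≤ LinearMap.ker ψ} →
      ({st : K × K // st ≠ 0} × (↥U × ↥(LinearMap.ker φ))) ⊕ (↥U × ↥U) :=
    fun z =>
      if h1 : φ z.1.1 = 0 ∧ φ z.1.2 = 0 then
        Sum.inr (⟨z.1.1, (memU1 z.1.1 z.1.2 z.2 h1.1 h1.2).1⟩,
                 ⟨z.1.2, (memU1 z.1.1 z.1.2 z.2 h1.1 h1.2).2⟩)
      else
        Sum.inl (⟨(φ z.1.1, φ z.1.2), by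
            simp only [ne_eq, Prod.mk_eq_zero]; exact h1⟩,
          ⟨φ z.1.2 • z.1.1 - φ z.1.1 • z.1.2, memW z.1.1 z.1.2 z.2⟩,
          if φ z.1.2 = 0 then ⟨z.1.1 - φ z.1.1 • x₀, memker z.1.1⟩
          else ⟨z.1.2 - φ z.1.2 • x₀, memker z.1.2⟩) with hF
  have hFinj : Function.Injective F := by
    rintro ⟨⟨a, b⟩, hz⟩ ⟨⟨a', b'⟩, hz'⟩ hzz
    by_cases h1 : φ a = 0 ∧ φ b = 0 <;> by_cases h1' : φ a' = 0 ∧ φ b' = 0 <;>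
      simp only [hF, h1, h1', and_self, dite_true, dite_false] at hzz
    · -- both inr
      simp only [Sum.inr.injEq, Prod.mk.injEq, Subtype.mk.injEq] at hzz
      simp [hzz.1, hzz.2]
    · exact (Sum.inr_ne_inl hzz).elim
    · exact (Sum.inl_ne_inr hzz).elim
    · -- both inl
      simp only [Sum.inl.injEq, Prod.mk.injEq, Subtype.mk.injEq] at hzz
      obtain ⟨⟨ea, eb⟩, ew, e3⟩ := hzz
      by_cases h2 : φ b = 0
      · have h2' : φ b' = 0 := by rw [← eb]; exact h2
        have ha0 : φ a ≠ 0 := fun h => h1 ⟨h, h2⟩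
        rw [if_pos h2, if_pos h2'] at e3
        simp only [Subtype.mk.injEq] at e3
        have haa : a = a' := by
          have := e3
          rw [← ea] at this
          exact sub_left_injective this
        subst haa
        have hbb : b = b' := by
          rw [h2, h2'] at ew
          simp only [zero_smul, zero_sub, neg_inj] at ew
          exact smul_right_injective V ha0 ew
        simp [hbb]
      · have h2' : φ b' ≠ 0 := by rw [← eb]; exact h2
        rw [if_neg h2, if_neg h2'] at e3
        simp only [Subtype.mk.injEq] at e3
        have hbb : b = b' := by
          have := e3
          rw [← eb] at this
          exact sub_left_injective this
        subst hbb
        have haa : a = a' := by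
          rw [← ea] at ew
          have : φ b • a = φ b • a' := by
            have := ew
            -- φ b • a - φ a • b = φ b • a' - φ a • b
            exact sub_left_injective this
          exact smul_right_injective V h2 this
        simp [haa]
  have hcard := Nat.card_le_card_of_injective F hFinj
  -- compute/bound card of T
  have cT : Nat.card (({st : K × K // st ≠ 0} × (↥U × ↥(LinearMap.ker φ))) ⊕ (↥U × ↥U))
      = Nat.card {st : K × K // st ≠ 0} * (Nat.card U * Nat.card (LinearMap.ker φ))
      + Nat.card U * Nat.card U := by
    rw [Nat.card_sum, Nat.card_prod, Nat.card_prod, Nat.card_prod]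
  have c1 : Nat.card {st : K × K // st ≠ 0} = q * q - 1 := by
    haveI : Fintype {st : K × K // st ≠ 0} := Fintype.ofFinite _
    rw [Nat.card_eq_fintype_card]
    have : Fintype.card {st : K × K // ¬ (st = 0)} = Fintype.card (K × K) - Fintype.card {st : K × K // st = 0} :=
      Fintype.card_subtype_compl _
    simpa [Fintype.card_subtype_eq, Fintype.card_prod, hq] using this
  have cU : Nat.card U ≤ q ^ j := by
    rw [cardsub U]
    exact Nat.pow_le_pow_right hq1 hU_rank
  have cker : Nat.card (LinearMap.ker φ) ≤ q ^ (j+1) := by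
    rw [cardsub _]
    exact Nat.pow_le_pow_right hq1 hker_rank
  refine hcard.trans ?_
  rw [cT, c1]
  have key : (q*q - 1) * (q ^ j * q ^ (j+1)) + q ^ j * q ^ j ≤ q ^ (2*j+3) := by
    have h1 : q ^ j * q ^ j ≤ q ^ j * q ^ (j + 1) := by
      apply Nat.mul_le_mul_left
      exact Nat.pow_le_pow_right hq1 (by omega)
    have h2 : (q*q - 1) * (q ^ j * q ^ (j+1)) + q ^ j * q ^ (j+1)
        = (q*q) * (q ^ j * q ^ (j+1)) := by
      have : q*q - 1 + 1 = q*q := by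
        have : 1 ≤ q*q := Nat.one_le_iff_ne_zero.mpr (by positivity)
        omega
      calc (q*q - 1) * (q ^ j * q ^ (j+1)) + q ^ j * q ^ (j+1)
          = (q*q - 1 + 1) * (q ^ j * q ^ (j+1)) := by ring
        _ = (q*q) * (q ^ j * q ^ (j+1)) := by rw [this]
    have h3 : (q*q) * (q ^ j * q ^ (j+1)) = q ^ (2*j+3) := by
      rw [← pow_add]
      rw [show q*q = q^2 by ring, ← pow_add]
      congr 1
      omega
    calc (q*q - 1) * (q ^ j * q ^ (j+1)) + q ^ j * q ^ j
        ≤ (q*q - 1) * (q ^ j * q ^ (j+1)) + q ^ j * q ^ (j+1) := by omega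
      _ = q ^ (2*j+3) := by rw [h2, h3]
  calc (q*q - 1) * (Nat.card U * Nat.card (LinearMap.ker φ)) + Nat.card U * Nat.card U
      ≤ (q*q - 1) * (q ^ j * q ^ (j+1)) + q ^ j * q ^ j := by
        apply Nat.add_le_add
        · exact Nat.mul_le_mul_left _ (Nat.mul_le_mul cU cker)
        · exact Nat.mul_le_mul cU cU
    _ ≤ q ^ (2*j+3) := key


/-- Existence of a good family of 2j+5 line-generating pairs (union bound). -/
lemma exists_good (K : Type) [Field K] [Fintype K] (j : ℕ) :
    ∃ w : Fin (2*j+5) → (Fin (j+2) → K) × (Fin (j+2) → K),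
      ∀ φ ψ : Module.Dual K (Fin (j+2) → K), φ ≠ 0 → ¬ LinearMap.ker φ ≤ LinearMap.ker ψ →
        ∃ i, ¬ (Submodule.span K {(w i).1, (w i).2} ⊓ LinearMap.ker φ ≤ LinearMap.ker ψ) := by
  classical
  set V := Fin (j+2) → K with hV
  set q := Fintype.card K with hq
  have hq2 : 2 ≤ q := Fintype.one_lt_card
  set m := 2*j+5 with hm
  by_contra hno
  push_neg at hno
  -- hno : ∀ w, ∃ φ ψ, φ ≠ 0 ∧ ¬ker φ ≤ ker ψ ∧ ∀ i, span ⊓ ker ≤ ker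
  haveI : Finite (Module.Dual K V) :=
    Finite.of_injective _ DFunLike.coe_injective
  haveI : Fintype (Module.Dual K V) := Fintype.ofFinite _
  have hdim : Module.finrank K V = j + 2 := Module.finrank_fin_fun K
  set Bd : Module.Dual K V × Module.Dual K V → Finset (V × V) := fun p =>
    Finset.univ.filter (fun ab =>
      Submodule.span K {ab.1, ab.2} ⊓ LinearMap.ker p.1 ≤ LinearMap.ker p.2) with hBd
  set J : Finset (Module.Dual K V × Module.Dual K V) :=
    Finset.univ.filter (fun p => p.1 ≠ 0 ∧ ¬ LinearMap.ker p.1 ≤ LinearMap.ker p.2) with hJ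
  have hsub : (Finset.univ : Finset (Fin m → V × V)) ⊆
      J.biUnion (fun p => Fintype.piFinset (fun _ : Fin m => Bd p)) := by
    intro w _
    obtain ⟨φ, ψ, h1, h2, h3⟩ := hno w
    refine Finset.mem_biUnion.mpr ⟨(φ, ψ), ?_, ?_⟩
    · simp [hJ, h1, h2]
    · rw [Fintype.mem_piFinset]
      intro i
      simp only [hBd, Finset.mem_filter, Finset.mem_univ, true_and]
      exact h3 i
  have hcard : Fintype.card (Fin m → V × V) ≤
      J.card * (q ^ (2*j+3)) ^ m := by
    have h1 := Finset.card_le_card hsub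
    rw [Finset.card_univ] at h1
    refine h1.trans ((Finset.card_biUnion_le).trans ?_)
    have h2 : ∀ p ∈ J, (Fintype.piFinset (fun _ : Fin m => Bd p)).card ≤ (q ^ (2*j+3)) ^ m := by
      intro p hp
      rw [Fintype.card_piFinset]
      simp only [Finset.prod_const, Finset.card_univ, Fintype.card_fin]
      apply Nat.pow_le_pow_left
      -- (Bd p).card ≤ q ^ (2j+3)
      have hpJ : p.1 ≠ 0 ∧ ¬ LinearMap.ker p.1 ≤ LinearMap.ker p.2 := by
        simpa [hJ] using hp
      have := countBad (K := K) (V := V) hdim p.1 p.2 hpJ.1 hpJ.2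
      rwa [Nat.card_eq_fintype_card, Fintype.card_subtype] at this
    calc (∑ p ∈ J, (Fintype.piFinset (fun _ : Fin m => Bd p)).card)
        ≤ J.card • ((q ^ (2*j+3)) ^ m) := Finset.sum_le_card_nsmul _ _ _ h2
      _ = J.card * (q ^ (2*j+3)) ^ m := smul_eq_mul _ _
  -- compute both sides as powers of q
  have cardV : Fintype.card V = q ^ (j+2) := by
    rw [card_eq_pow_finrank (K := K) (V := V), hdim]
  have cardDual : Fintype.card (Module.Dual K V) = q ^ (j+2) := by
    rw [card_eq_pow_finrank (K := K) (V := Module.Dual K V), Subspace.dual_finrank_eq, hdim]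
  have cardΩ : Fintype.card (Fin m → V × V) = q ^ (2*(j+2)*m) := by
    rw [Fintype.card_fun, Fintype.card_prod, cardV, Fintype.card_fin, ← pow_add, ← pow_mul]
    congr 1
    ring
  have hJcard : J.card ≤ q ^ (2*(j+2)) := by
    calc J.card ≤ Fintype.card (Module.Dual K V × Module.Dual K V) := by
          rw [← Finset.card_univ]; exact Finset.card_le_card (Finset.subset_univ _)
      _ = q ^ (2*(j+2)) := by
          rw [Fintype.card_prod, cardDual, ← pow_add]; congr 1; ring
  have hfinal : q ^ (2*(j+2)*m) ≤ q ^ (2*(j+2) + (2*j+3)*m) := by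
    calc q ^ (2*(j+2)*m) = Fintype.card (Fin m → V × V) := cardΩ.symm
      _ ≤ J.card * (q ^ (2*j+3)) ^ m := hcard
      _ ≤ q ^ (2*(j+2)) * (q ^ (2*j+3)) ^ m := by
          exact Nat.mul_le_mul_right _ hJcard
      _ = q ^ (2*(j+2) + (2*j+3)*m) := by rw [← pow_mul, ← pow_add]
  have hexp := (Nat.pow_le_pow_iff_right hq2).mp hfinal
  have : 2*(j+2)*m = 2*(j+2) + (2*j+3)*m + 1 := by rw [hm]; ring
  omega
/-- Main construction: a strong blocking set of at most `(2j+5)(q+1)` points in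
`PG(j+1, q)`. -/
lemma main_construction (K : Type) [Field K] [Fintype K] (j : ℕ) :
    ∃ M : Set (Projectivization K (Fin (j+2) → K)),
      IsStrongBlockingSet M ∧ M.ncard ≤ (2*j+5) * (Fintype.card K + 1) := by
  classical
  obtain ⟨w, hw⟩ := exists_good K j
  have hdim : Module.finrank K (Fin (j+2) → K) = j + 2 := Module.finrank_fin_fun K
  set W : Fin (2*j+5) → Submodule K (Fin (j+2) → K) := fun i => Submodule.span K {(w i).1, (w i).2} with hW
  set M : Set (Projectivization K (Fin (j+2) → K)) := {P | ∃ i, P.submodule ≤ W i} with hM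
  refine ⟨M, ?_, ?_⟩
  · -- strong blocking
    intro H hH
    have hle : projSpan {P | P ∈ M ∧ P.submodule ≤ H} ≤ H := iSup₂_le fun P hP => hP.2
    by_contra hne
    have hlt : projSpan {P | P ∈ M ∧ P.submodule ≤ H} < H := hle.lt_of_ne hne
    obtain ⟨x, hxH, hxD⟩ := SetLike.exists_of_lt hlt
    obtain ⟨ψ, hDψ, hψx⟩ := exists_dual_sep _ hxD
    obtain ⟨φ, hker, hφ⟩ := hyperplane_ker hH
    have hcond : ¬ LinearMap.ker φ ≤ LinearMap.ker ψ := by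
      intro hle'
      rw [← hker] at hxH
      exact hψx (hle' hxH)
    obtain ⟨i, hi⟩ := hw φ ψ hφ hcond
    rw [SetLike.not_le_iff_exists] at hi
    obtain ⟨v, hvWH, hvψ⟩ := hi
    have hv0 : v ≠ 0 := fun h => hvψ (h ▸ (LinearMap.ker ψ).zero_mem)
    set P : Projectivization K (Fin (j+2) → K) := Projectivization.mk K v hv0 with hP
    have hPsub : P.submodule = Submodule.span K {v} := Projectivization.submodule_mk v hv0
    have hPM : P ∈ M := ⟨i, by
      rw [hPsub]
      exact (Submodule.span_singleton_le_iff_mem v _).mpr hvWH.1⟩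
    have hPH : P.submodule ≤ H := by
      rw [hPsub]
      refine (Submodule.span_singleton_le_iff_mem v _).mpr ?_
      rw [← hker]
      exact hvWH.2
    have hPD : P.submodule ≤ projSpan {P | P ∈ M ∧ P.submodule ≤ H} :=
      le_iSup₂ (f := fun (P : Projectivization K (Fin (j+2) → K))
        (_ : P ∈ {P | P ∈ M ∧ P.submodule ≤ H}) => P.submodule) P ⟨hPM, hPH⟩
    have hvD : v ∈ projSpan {P | P ∈ M ∧ P.submodule ≤ H} := by
      apply hPD
      rw [hPsub]
      exact Submodule.mem_span_singleton_self v
    exact hvψ (hDψ hvD)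
  · -- cardinality
    have hone : (fun _ => 1 : Fin (j+2) → K) ≠ 0 := by
      intro h
      have := congrFun h ⟨0, by omega⟩
      simpa using this
    set P0 : Projectivization K (Fin (j+2) → K) := Projectivization.mk K _ hone with hP0
    set G : Fin (2*j+5) × Option K → Projectivization K (Fin (j+2) → K) := fun z =>
      match z.2 with
      | none => if h : (w z.1).2 ≠ 0 then Projectivization.mk K _ h else P0
      | some γ => if h : (w z.1).1 + γ • (w z.1).2 ≠ 0 then Projectivization.mk K _ h else P0
      with hG
    have hsub : M ⊆ G '' Set.univ := by
      rintro P ⟨i, hPW⟩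
      have hrep : P.rep ∈ W i := by
        rw [Projectivization.submodule_eq] at hPW
        exact (Submodule.span_singleton_le_iff_mem _ _).mp hPW
      obtain ⟨α, β, hαβ⟩ := Submodule.mem_span_pair.mp hrep
      have hrep0 : P.rep ≠ 0 := Projectivization.rep_nonzero P
      by_cases hα : α = 0
      · -- P = G (i, none)
        have hβ : β ≠ 0 := by
          intro h
          rw [hα, h] at hαβ
          simp at hαβ
          exact hrep0 hαβ.symm
        have hb : (w i).2 ≠ 0 := by
          intro h
          rw [hα, h] at hαβ
          simp at hαβ
          exact hrep0 hαβ.symm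
        refine ⟨(i, none), Set.mem_univ _, ?_⟩
        show (if h : (w i).2 ≠ 0 then Projectivization.mk K _ h else P0) = P
        rw [dif_pos hb]
        have : Projectivization.mk K ((w i).2) hb = Projectivization.mk K P.rep hrep0 := by
          rw [Projectivization.mk_eq_mk_iff]
          refine ⟨Units.mk0 β⁻¹ (inv_ne_zero hβ), ?_⟩
          have : β • (w i).2 = P.rep := by
            rw [hα] at hαβ; simpa using hαβ
          rw [← this, Units.smul_def, Units.val_mk0]
          simp [smul_smul, inv_mul_cancel₀ hβ]
        rw [this, Projectivization.mk_rep]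
      · -- P = G (i, some (α⁻¹ * β))
        set v : Fin (j+2) → K := (w i).1 + (α⁻¹ * β) • (w i).2 with hv
        have hvrep : v = α⁻¹ • P.rep := by
          rw [← hαβ, smul_add, smul_smul, inv_mul_cancel₀ hα, one_smul, smul_smul]
        have hv0 : v ≠ 0 := by
          rw [hvrep]
          exact smul_ne_zero (inv_ne_zero hα) hrep0
        refine ⟨(i, some (α⁻¹ * β)), Set.mem_univ _, ?_⟩
        show (if h : (w i).1 + (α⁻¹ * β) • (w i).2 ≠ 0
          then Projectivization.mk K _ h else P0) = P
        rw [dif_pos (hv ▸ hv0)]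
        have : Projectivization.mk K ((w i).1 + (α⁻¹ * β) • (w i).2) (hv ▸ hv0) =
            Projectivization.mk K P.rep hrep0 := by
          rw [Projectivization.mk_eq_mk_iff]
          refine ⟨Units.mk0 α⁻¹ (inv_ne_zero hα), ?_⟩
          rw [Units.smul_def, Units.val_mk0, ← hv]
          exact hvrep.symm
        rw [this, Projectivization.mk_rep]
    calc M.ncard ≤ (G '' Set.univ).ncard := Set.ncard_le_ncard hsub (Set.toFinite _)
      _ ≤ (Set.univ : Set (Fin (2*j+5) × Option K)).ncard := Set.ncard_image_le (Set.toFinite _)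
      _ = (2*j+5) * (Fintype.card K + 1) := by
          rw [Set.ncard_univ, Nat.card_prod, Nat.card_eq_fintype_card,
            Nat.card_eq_fintype_card, Fintype.card_fin, Fintype.card_option]

/-- There is an absolute constant `c` such that for every prime power `q` (i.e. every
finite field `K`), there is an infinite increasing sequence of dimensions `k i` such
that `PG(k i - 1, q)` contains a strong blocking set of size at most `c * q * k i`. -/
theorem stmt16 :
    ∃ c : ℝ, 0 < c ∧ ∀ (K : Type) [Field K] [Fintype K],
      ∃ k : ℕ → ℕ, StrictMono k ∧
        ∀ i, ∃ M : Set (Projectivization K (Fin (k i) → K)),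
          IsStrongBlockingSet M ∧ (M.ncard : ℝ) ≤ c * (Fintype.card K : ℝ) * (k i : ℝ) := by
  refine ⟨6, by norm_num, ?_⟩
  intro K _ _
  refine ⟨fun i => i + 2, fun a b h => by simpa using h, ?_⟩
  intro i
  obtain ⟨M, hM, hcard⟩ := main_construction K i
  refine ⟨M, hM, ?_⟩
  have hq2 : 2 ≤ Fintype.card K := Fintype.one_lt_card
  have hnat : M.ncard ≤ 6 * Fintype.card K * (i + 2) := by
    refine hcard.trans ?_
    nlinarith [hq2, Nat.zero_le i]
  calc (M.ncard : ℝ) ≤ ((6 * Fintype.card K * (i + 2) : ℕ) : ℝ) := by exact_mod_cast hnat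
    _ = 6 * (Fintype.card K : ℝ) * ((i : ℕ) + 2 : ℕ) := by push_cast; ring
    _ = 6 * (Fintype.card K : ℝ) * ((fun i => i + 2) i : ℕ) := by norm_num
end

section
/- Any collection of lines in PG(k-1,q) satisfying the avoidance property has size at least k - 1 + ⌊(k-1)/2⌋. -/
open Projectivization

/-- A set of lines (2-dimensional subspaces) satisfies the avoidance property if
no codimension-2 subspace meets every line of the set. -/
def AvoidanceProperty {K V : Type*} [DivisionRing K] [AddCommGroup V] [Module K V]
    (L : Set (Submodule K V)) : Prop :=
  ¬ ∃ W : Submodule K V, Module.finrank K W + 2 = Module.finrank K V ∧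
      ∀ ℓ ∈ L, W ⊓ ℓ ≠ ⊥

open Module Submodule

section Aux

variable {K V : Type*} [Field K] [AddCommGroup V] [Module K V] [FiniteDimensional K V]

/-- Any submodule contained in `S` with small enough finrank can be enlarged, inside `S`,
to a submodule of any prescribed intermediate finrank. -/
lemma exists_superm_finrank_eq (U S : Submodule K V) (hUS : U ≤ S) (d : ℕ)
    (h1 : finrank K U ≤ d) (h2 : d ≤ finrank K S) :
    ∃ W : Submodule K V, U ≤ W ∧ W ≤ S ∧ finrank K W = d := by
  induction d, h1 using Nat.le_induction with
  | base => exact ⟨U, le_rfl, hUS, rfl⟩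
  | succ n hn IH =>
    obtain ⟨W, hUW, hWS, hWr⟩ := IH (by omega)
    have hWneS : ¬ (S ≤ W) := by
      intro h
      have := Submodule.finrank_mono h
      omega
    obtain ⟨v, hvS, hvW⟩ : ∃ v, v ∈ S ∧ v ∉ W := by
      by_contra h
      push_neg at h
      exact hWneS h
    have hv0 : v ≠ 0 := fun h => hvW (h ▸ W.zero_mem)
    have hdisj : W ⊓ (Submodule.span K {v}) = ⊥ :=
      disjoint_iff.mp ((Submodule.disjoint_span_singleton' hv0).mpr hvW)
    refine ⟨W ⊔ Submodule.span K {v}, le_trans hUW le_sup_left,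
      sup_le hWS (Submodule.span_le.mpr (by simpa using hvS)), ?_⟩
    have := Submodule.finrank_sup_add_finrank_inf_eq W (Submodule.span K {v})
    rw [hdisj, finrank_bot, finrank_span_singleton hv0] at this
    omega

/-- The main theorem in odd dimension `2s+1`. -/
lemma odd_main (L : Set (Submodule K V)) (hLfin : L.Finite)
    (hL : ∀ ℓ ∈ L, finrank K ℓ = 2) (hAv : AvoidanceProperty L)
    (s : ℕ) (hk : finrank K V = 2 * s + 1) :
    3 * s ≤ L.ncard := by
  classical
  -- the set of cardinalities of independent subfamilies of L
  set cs : Set ℕ := {n | ∃ F : Finset (Submodule K V),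
    (↑F ⊆ L ∧ finrank K (F.sup id : Submodule K V) = 2 * F.card) ∧ F.card = n} with hcs
  have h0 : 0 ∈ cs := ⟨∅, ⟨by simp, by simp [finrank_bot]⟩, by simp⟩
  have hbdd : ∀ n ∈ cs, n ≤ s := by
    rintro n ⟨F, ⟨-, hFr⟩, rfl⟩
    have := Submodule.finrank_le (F.sup id)
    omega
  have hbdd' : BddAbove cs := ⟨s, fun n hn => hbdd n hn⟩
  have htmem : sSup cs ∈ cs := Nat.sSup_mem ⟨0, h0⟩ hbdd'
  obtain ⟨F, ⟨hFL, hFr⟩, hFcard⟩ := htmem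
  set t := sSup cs with ht
  set S₀ := F.sup id with hS₀
  have hts : t ≤ s := hbdd t ⟨F, ⟨hFL, hFr⟩, hFcard⟩
  -- every line of L meets S₀
  have hmeet : ∀ m ∈ L, m ⊓ S₀ ≠ ⊥ := by
    intro m hm
    by_cases hmF : m ∈ F
    · have hle : m ≤ S₀ := Finset.le_sup (f := id) hmF
      rw [inf_eq_left.mpr hle]
      intro hbot
      have := hL m hm
      rw [hbot, finrank_bot] at this
      omega
    · intro hbot
      have hcard' : (insert m F).card = F.card + 1 := Finset.card_insert_of_notMem hmF
      have hsup : (insert m F).sup id = m ⊔ S₀ := by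
        rw [Finset.sup_insert]; rfl
      have hrk : finrank K ((insert m F).sup id : Submodule K V) = 2 * (insert m F).card := by
        have h2 := Submodule.finrank_sup_add_finrank_inf_eq m S₀
        rw [hbot, finrank_bot, hL m hm, hsup] at *
        rw [hcard', hFcard]
        omega
      have : F.card + 1 ∈ cs := ⟨insert m F, ⟨by
        intro x hx
        rcases Finset.mem_insert.mp (by exact_mod_cast hx) with rfl | hx'
        · exact hm
        · exact hFL hx', hrk⟩, hcard'⟩
      have := le_csSup hbdd' this
      omega
  -- t = s
  have htseq : t = s := by
    by_contra hne
    have htlt : t ≤ s - 1 := by omega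
    have hS₀r : finrank K S₀ = 2 * t := by rw [hFr, hFcard]
    obtain ⟨W, hSW, -, hWr⟩ := exists_superm_finrank_eq S₀ ⊤ le_top (2 * s - 1)
      (by rw [hS₀r]; omega) (by rw [finrank_top, hk]; omega)
    refine hAv ⟨W, by rw [hWr, hk]; omega, fun ℓ hℓ => ?_⟩
    intro hbot
    apply hmeet ℓ hℓ
    rw [eq_bot_iff] at hbot ⊢
    exact le_trans (inf_le_inf_left ℓ hSW) (by rw [inf_comm] at hbot; exact hbot)
  have hS₀rank : finrank K S₀ = 2 * s := by rw [hFr, hFcard, htseq]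
  -- the extras
  set E : Set (Submodule K V) := L \ ↑F with hE
  have hEfin : E.Finite := hLfin.diff
  have hcount : E.ncard + s = L.ncard := by
    have h := Set.ncard_diff_add_ncard_of_subset hFL hLfin
    rw [Set.ncard_coe_finset, hFcard, htseq] at h
    exact h
  by_contra hcon
  have hEcard : E.ncard ≤ 2 * s - 1 := by omega
  have hEcard' : E.ncard + 1 ≤ 2 * s := by omega
  -- choose a nonzero point of m ⊓ S₀ for each extra m
  have hPex : ∀ m ∈ E, ∃ x, x ∈ m ⊓ S₀ ∧ x ≠ 0 := by
    intro m hm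
    have := hmeet m hm.1
    rcases (Submodule.ne_bot_iff _).mp this with ⟨x, hx, hx0⟩
    exact ⟨x, hx, hx0⟩
  set g : Submodule K V → V := fun m => if h : m ∈ E then (hPex m h).choose else 0 with hg
  have hgspec : ∀ m ∈ E, g m ∈ m ⊓ S₀ ∧ g m ≠ 0 := by
    intro m hm
    simp only [hg, dif_pos hm]
    exact (hPex m hm).choose_spec
  set Y : Submodule K V := Submodule.span K (g '' E) with hY
  have hYS : Y ≤ S₀ := by
    rw [hY, Submodule.span_le]
    rintro x ⟨m, hm, rfl⟩
    exact ((hgspec m hm).1).2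
  have hYrank : finrank K Y ≤ 2 * s - 1 := by
    have himg : g '' E = ↑(hEfin.toFinset.image g) := by
      rw [Finset.coe_image, Set.Finite.coe_toFinset]
    have h1 : finrank K Y ≤ (hEfin.toFinset.image g).card := by
      rw [hY, himg]
      exact finrank_span_finset_le_card _
    have h2 : (hEfin.toFinset.image g).card ≤ hEfin.toFinset.card :=
      Finset.card_image_le
    have h3 : hEfin.toFinset.card = E.ncard := (Set.ncard_eq_toFinset_card E hEfin).symm
    omega
  obtain ⟨W₀, hYW, hWS, hW₀r⟩ := exists_superm_finrank_eq Y S₀ hYS (2 * s - 1)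
    hYrank (by omega)
  refine hAv ⟨W₀, by rw [hW₀r, hk]; omega, fun ℓ hℓ => ?_⟩
  by_cases hlF : ℓ ∈ F
  · -- dimension count inside S₀
    intro hbot
    have hsup : W₀ ⊔ ℓ ≤ S₀ := sup_le hWS (Finset.le_sup (f := id) hlF)
    have h1 : finrank K ((W₀ ⊔ ℓ : Submodule K V)) ≤ 2 * s :=
      hS₀rank ▸ Submodule.finrank_mono hsup
    have h2 := Submodule.finrank_sup_add_finrank_inf_eq W₀ ℓ
    rw [hbot, finrank_bot, hL ℓ hℓ, hW₀r] at h2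
    omega
  · -- ℓ is an extra: its chosen point is in W₀
    have hℓE : ℓ ∈ E := ⟨hℓ, hlF⟩
    have hx := hgspec ℓ hℓE
    have hxW : g ℓ ∈ W₀ := hYW (Submodule.subset_span ⟨ℓ, hℓE, rfl⟩)
    refine (Submodule.ne_bot_iff _).mpr ⟨g ℓ, ?_, hx.2⟩
    exact Submodule.mem_inf.mpr ⟨hxW, (Submodule.mem_inf.mp hx.1).1⟩

/-- The general bound, for an arbitrary finite-dimensional vector space. -/
lemma main_general (L : Set (Submodule K V)) (hLfin : L.Finite)
    (hL : ∀ ℓ ∈ L, finrank K ℓ = 2) (hAv : AvoidanceProperty L) :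
    (finrank K V - 1) + (finrank K V - 1) / 2 ≤ L.ncard := by
  classical
  set k := finrank K V with hk
  rcases Nat.lt_or_ge k 2 with hk2 | hk2
  · have hz : k - 1 + (k - 1) / 2 = 0 := by omega
    exact hz ▸ Nat.zero_le _
  -- k ≥ 2 : L is nonempty
  have hLne : L.Nonempty := by
    rcases L.eq_empty_or_nonempty with rfl | h
    · exfalso
      obtain ⟨W, -, -, hWr⟩ := exists_superm_finrank_eq ⊥ ⊤ bot_le (k - 2)
        (by rw [finrank_bot K V]; exact Nat.zero_le _) (by rw [finrank_top K V]; omega)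
      exact hAv ⟨W, by omega, fun ℓ hℓ => absurd hℓ (Set.notMem_empty ℓ)⟩
    · exact h
  rcases Nat.even_or_odd k with hkpar | hkpar
  swap
  · -- odd case
    obtain ⟨s, hs⟩ := hkpar
    have := odd_main L hLfin hL hAv s (by omega)
    omega
  -- even case: project from a point on a line
  obtain ⟨ℓ₁, hℓ₁⟩ := hLne
  obtain ⟨p, hpℓ, hp0⟩ : ∃ p, p ∈ ℓ₁ ∧ p ≠ 0 := by
    rcases (Submodule.ne_bot_iff ℓ₁).mp (fun h => by
      have := hL ℓ₁ hℓ₁; rw [h, finrank_bot] at this; omega) with ⟨x, hx, hx0⟩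
    exact ⟨x, hx, hx0⟩
  set P : Submodule K V := Submodule.span K {p} with hP
  have hPr : finrank K P = 1 := finrank_span_singleton hp0
  have hQr : finrank K (V ⧸ P) = k - 1 := by
    have := Submodule.finrank_quotient_add_finrank P
    omega
  set π := P.mkQ with hπ
  set D : Set (Submodule K V) := {ℓ ∈ L | P ⊓ ℓ = ⊥} with hD
  set L'' : Set (Submodule K (V ⧸ P)) := (Submodule.map π) '' D with hL''
  -- images of lines disjoint from P are 2-dimensional
  have hrank_map : ∀ ℓ ∈ D, finrank K (Submodule.map π ℓ) = 2 := by
    rintro ℓ ⟨hℓL, hℓP⟩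
    have hcomp := LinearMap.finrank_range_add_finrank_ker (π.comp ℓ.subtype)
    have hrange : LinearMap.range (π.comp ℓ.subtype) = Submodule.map π ℓ := by
      rw [LinearMap.range_comp, Submodule.range_subtype]
    have hker : LinearMap.ker (π.comp ℓ.subtype) = ⊥ := by
      rw [LinearMap.ker_comp]
      rw [eq_bot_iff]
      rintro ⟨x, hxℓ⟩ hx
      simp only [Submodule.mem_comap, Submodule.subtype_apply] at hx
      have hxP : x ∈ P := by
        rwa [hπ, Submodule.ker_mkQ] at hx
      have : x ∈ P ⊓ ℓ := ⟨hxP, hxℓ⟩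
      rw [hℓP] at this
      simpa using this
    rw [hrange, hker, finrank_bot, hL ℓ hℓL] at hcomp
    omega
  have hL''lines : ∀ ℓ'' ∈ L'', finrank K ℓ'' = 2 := by
    rintro ℓ'' ⟨ℓ, hℓ, rfl⟩
    exact hrank_map ℓ hℓ
  have hL''fin : L''.Finite := ((hLfin.subset (Set.sep_subset _ _)).image _)
  -- avoidance descends to the quotient
  have hAv'' : AvoidanceProperty L'' := by
    rintro ⟨W', hW'r, hW'meet⟩
    set W : Submodule K V := Submodule.comap π W' with hW
    have hPW : P ≤ W := by
      intro x hx
      have : π x = 0 := by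
        rw [hπ]
        simpa [Submodule.Quotient.mk_eq_zero] using hx
      simp only [hW, Submodule.mem_comap, this]
      exact W'.zero_mem
    have hWr : finrank K W = k - 2 := by
      have hcomp := LinearMap.finrank_range_add_finrank_ker (π.comp W.subtype)
      have hrange : LinearMap.range (π.comp W.subtype) = W' := by
        rw [LinearMap.range_comp, Submodule.range_subtype, hW,
          Submodule.map_comap_eq_of_surjective (Submodule.mkQ_surjective P)]
      have hker : LinearMap.ker (π.comp W.subtype) = Submodule.comap W.subtype P := by
        rw [LinearMap.ker_comp, hπ, Submodule.ker_mkQ]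
      have hkerr : finrank K (LinearMap.ker (π.comp W.subtype)) = 1 := by
        rw [hker, LinearEquiv.finrank_eq (Submodule.comapSubtypeEquivOfLe hPW), hPr]
      rw [hrange, hkerr] at hcomp
      omega
    refine hAv ⟨W, by omega, fun ℓ hℓ => ?_⟩
    by_cases hℓP : P ⊓ ℓ = ⊥
    · -- use the image line
      have := hW'meet (Submodule.map π ℓ) ⟨ℓ, ⟨hℓ, hℓP⟩, rfl⟩
      rcases (Submodule.ne_bot_iff _).mp this with ⟨y, hy, hy0⟩
      rcases Submodule.mem_inf.mp hy with ⟨hyW', hymap⟩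
      rcases Submodule.mem_map.mp hymap with ⟨x, hxℓ, rfl⟩
      refine (Submodule.ne_bot_iff _).mpr ⟨x, Submodule.mem_inf.mpr ⟨?_, hxℓ⟩, ?_⟩
      · simpa [hW] using hyW'
      · rintro rfl
        simp at hy0
    · -- ℓ contains p's line
      rcases (Submodule.ne_bot_iff _).mp hℓP with ⟨x, hx, hx0⟩
      rcases Submodule.mem_inf.mp hx with ⟨hxP, hxℓ⟩
      refine (Submodule.ne_bot_iff _).mpr ⟨x, Submodule.mem_inf.mpr ⟨hPW hxP, hxℓ⟩, hx0⟩
  -- apply the odd case in the quotient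
  have hsval : ∃ s, k - 1 = 2 * s + 1 ∧ 1 ≤ s + 1 := by
    obtain ⟨s', hseq⟩ := hkpar
    exact ⟨s' - 1, by omega, by omega⟩
  obtain ⟨s, hs1, -⟩ := hsval
  have hodd := odd_main (V := V ⧸ P) L'' hL''fin hL''lines hAv'' s (by omega)
  -- counting
  have hDsub : D ⊆ L \ {ℓ₁} := by
    rintro ℓ ⟨hℓL, hℓP⟩
    refine ⟨hℓL, fun h => ?_⟩
    rw [Set.mem_singleton_iff] at h
    subst h
    have : p ∈ P ⊓ ℓ := ⟨Submodule.mem_span_singleton_self p, hpℓ⟩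
    rw [hℓP] at this
    exact hp0 (by simpa using this)
  have hc1 : L''.ncard ≤ D.ncard := Set.ncard_image_le (hLfin.subset (Set.sep_subset _ _))
  have hc2 : D.ncard ≤ (L \ {ℓ₁}).ncard := Set.ncard_le_ncard hDsub (hLfin.diff)
  have hc3 : (L \ {ℓ₁}).ncard + 1 = L.ncard := by
    have := Set.ncard_diff_add_ncard_of_subset (Set.singleton_subset_iff.mpr hℓ₁) hLfin
    simpa using this
  omega

end Aux

/-- Any collection of lines in `PG(k-1, q)` satisfying the avoidance property has size
at least `k - 1 + ⌊(k-1)/2⌋`. -/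
theorem stmt17 {q k : ℕ} (K : Type*) [Field K] [Fintype K] (hq : Fintype.card K = q)
    (L : Set (Submodule K (Fin k → K))) (hL : ∀ ℓ ∈ L, Module.finrank K ℓ = 2)
    (hAv : AvoidanceProperty L) :
    k - 1 + (k - 1) / 2 ≤ L.ncard := by
  have hfinV : Finite (Fin k → K) := by infer_instance
  have hfinsub : Finite (Submodule K (Fin k → K)) :=
    Finite.of_injective (fun p => (p : Set (Fin k → K))) SetLike.coe_injective
  have hLfin : L.Finite := L.toFinite
  have h := main_general L hLfin hL hAv
  rwa [Module.finrank_fin_fun] at h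
end

section
/- Let G = (V,E) be a graph on n vertices, let S ⊆ V with |S| = σ, and suppose every connected component of G - S has size at most κ, where σ + κ = ι(G) (S achieves the integrity). If the components of G - S have sizes c_1 ≥ c_2 ≥ ... ≥ c_t with c_1 = κ, then n - ι(G) = Σ_{i=2}^t c_i ≤ 2z(G), where z(G) is the largest z such that there are two disjoint sets of z vertices with no edge between them. -/
open SimpleGraph

/-- The maximum size of a connected component of a graph. -/
noncomputable def maxCompCard {W : Type*} (H : SimpleGraph W) : ℕ :=
  sSup {m | ∃ c : H.ConnectedComponent, m = c.supp.ncard}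

/-- The vertex integrity of a graph. -/
noncomputable def integrity {V : Type*} [Fintype V] (G : SimpleGraph V) : ℕ :=
  sInf {m | ∃ S : Finset V, m = S.card + maxCompCard (G.induce ((↑S : Set V)ᶜ))}

/-- The largest `z` such that there are two disjoint sets of `z` vertices with
no edge between them. -/
noncomputable def zParam {V : Type*} [Fintype V] (G : SimpleGraph V) : ℕ :=
  sSup {z | ∃ A B : Finset V, A.card = z ∧ B.card = z ∧ Disjoint A B ∧
    ∀ a ∈ A, ∀ b ∈ B, ¬ G.Adj a b}

lemma aux_min_prefix {ι : Type*} [DecidableEq ι] (s : Finset ι) (f : ι → ℕ) (κ z : ℕ)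
    (hf : ∀ i ∈ s, f i ≤ κ) (hsum : z + 1 ≤ ∑ i ∈ s, f i) :
    ∃ P ⊆ s, z + 1 ≤ ∑ i ∈ P, f i ∧ ∑ i ∈ P, f i ≤ z + κ := by
  classical
  set T := s.powerset.filter (fun P => z + 1 ≤ ∑ i ∈ P, f i) with hT
  have hsT : s ∈ T := by simp [hT, hsum]; omega
  obtain ⟨P, hPT, hmin⟩ := T.exists_min_image (fun P => ∑ i ∈ P, f i) ⟨s, hsT⟩
  rw [hT, Finset.mem_filter, Finset.mem_powerset] at hPT
  obtain ⟨hPs, hPsum⟩ := hPT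
  refine ⟨P, hPs, hPsum, ?_⟩
  have hne : ∃ i ∈ P, f i ≠ 0 := by
    by_contra h
    push_neg at h
    have : ∑ i ∈ P, f i = 0 := Finset.sum_eq_zero (fun i hi => h i hi)
    omega
  obtain ⟨i, hiP, hfi⟩ := hne
  have hQ : ∑ j ∈ P.erase i, f j + f i = ∑ j ∈ P, f j := Finset.sum_erase_add _ _ hiP
  have hQlt : ¬ (z + 1 ≤ ∑ j ∈ P.erase i, f j) := by
    intro hle
    have hQT : P.erase i ∈ T := by
      rw [hT, Finset.mem_filter, Finset.mem_powerset]
      exact ⟨(Finset.erase_subset _ _).trans hPs, hle⟩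
    have := hmin _ hQT
    omega
  have := hf i (hPs hiP)
  omega

/-- Let `S` be a set of `σ` vertices achieving the integrity of `G` (every component of
`G - S` has size at most `κ` and `σ + κ = ι(G)`), and let `c 1 ≥ c 2 ≥ ... ≥ c t` be
the sizes of the components of `G - S`, with `c 1 = κ`. Then
`n - ι(G) = ∑_{i = 2}^t c i ≤ 2 z(G)`. -/
theorem stmt19 {V : Type*} [Fintype V] (G : SimpleGraph V) (S : Finset V) (σ κ : ℕ)
    (hS : S.card = σ)
    (hκ : ∀ c : (G.induce ((↑S : Set V)ᶜ)).ConnectedComponent, c.supp.ncard ≤ κ)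
    (hι : σ + κ = integrity G)
    (t : ℕ) (ht : 0 < t) (c : Fin t → ℕ) (hmono : Antitone c)
    (e : (G.induce ((↑S : Set V)ᶜ)).ConnectedComponent ≃ Fin t)
    (hsizes : ∀ comp, comp.supp.ncard = c (e comp))
    (hc1 : c ⟨0, ht⟩ = κ) :
    Fintype.card V - integrity G = ∑ i ∈ Finset.univ.erase (⟨0, ht⟩ : Fin t), c i ∧
      ∑ i ∈ Finset.univ.erase (⟨0, ht⟩ : Fin t), c i ≤ 2 * zParam G := by
  classical
  let H := G.induce ((↑S : Set V)ᶜ)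
  set z0 : Fin t := ⟨0, ht⟩ with hz0
  set R := ∑ i ∈ Finset.univ.erase z0, c i with hR
  -- fiber cardinalities
  have hfiber : ∀ i : Fin t,
      (Finset.univ.filter fun w : ((↑S : Set V)ᶜ : Set V) => e (H.connectedComponentMk w) = i).card
        = c i := by
    intro i
    have h1 : (e.symm i).supp.ncard = c i := by
      rw [hsizes (e.symm i), Equiv.apply_symm_apply]
    rw [← h1]
    rw [Set.ncard_eq_toFinset_card']
    congr 1
    ext w
    simp only [Finset.mem_filter, Finset.mem_univ, true_and, Set.mem_toFinset,
      ConnectedComponent.mem_supp_iff]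
    exact (Equiv.eq_symm_apply e).symm
  have hcardW : Fintype.card ((↑S : Set V)ᶜ : Set V) = ∑ i : Fin t, c i := by
    rw [← Finset.card_univ,
      Finset.card_eq_sum_card_fiberwise
        (f := fun w => e (H.connectedComponentMk w)) (t := Finset.univ)
        (fun x _ => Finset.mem_univ _)]
    exact Finset.sum_congr rfl fun i _ => hfiber i
  have hScard : S.card ≤ Fintype.card V := Finset.card_le_univ S
  have hcompl : Fintype.card ((↑S : Set V)ᶜ : Set V) = Fintype.card V - S.card := by
    rw [Fintype.card_compl_set]
    congr 1
    simp
  have hsum_split : ∑ i : Fin t, c i = R + κ := by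
    rw [hR, ← hc1]
    exact (Finset.sum_erase_add _ _ (Finset.mem_univ z0)).symm
  have hVcard : Fintype.card V = integrity G + R := by
    have := hcompl
    rw [hcardW, hsum_split] at this
    omega
  constructor
  · omega
  · -- second part
    by_contra hcon
    push_neg at hcon
    set z := zParam G with hz
    have hRlt : 2 * z + 1 ≤ R := hcon
    have hfle : ∀ i ∈ Finset.univ.erase z0, c i ≤ κ := by
      intro i _
      rw [← hc1]
      exact hmono (by simp [hz0, Fin.le_def])
    obtain ⟨P, hPs, hPge, hPle⟩ := aux_min_prefix (Finset.univ.erase z0) c κ z hfle (by omega)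
    -- the complementary index set
    set Q2 : Finset (Fin t) := insert z0 ((Finset.univ.erase z0) \ P) with hQ2
    have hQ2sum : z + 1 ≤ ∑ i ∈ Q2, c i := by
      have hd : ∑ i ∈ (Finset.univ.erase z0) \ P, c i + ∑ i ∈ P, c i
          = R := Finset.sum_sdiff hPs
      have hz0n : z0 ∉ (Finset.univ.erase z0) \ P := by simp
      rw [hQ2, Finset.sum_insert hz0n, hc1]
      omega
    have hdisj : Disjoint P Q2 := by
      rw [hQ2, Finset.disjoint_insert_right]
      constructor
      · intro hmem
        exact absurd (hPs hmem) (by simp)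
      · exact Finset.disjoint_sdiff
    -- vertex sets
    set F : Finset (Fin t) → Finset V := fun Q =>
      (Finset.univ.filter fun w : ((↑S : Set V)ᶜ : Set V) => e (H.connectedComponentMk w) ∈ Q).image
        Subtype.val with hF
    have hFcard : ∀ Q : Finset (Fin t), (F Q).card = ∑ i ∈ Q, c i := by
      intro Q
      rw [hF]
      rw [Finset.card_image_of_injective _ Subtype.val_injective]
      rw [Finset.card_eq_sum_card_fiberwise
        (f := fun w => e (H.connectedComponentMk w)) (t := Q)
        (s := Finset.univ.filter fun w : ((↑S : Set V)ᶜ : Set V) => e (H.connectedComponentMk w) ∈ Q)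
        (fun x hx => Finset.mem_coe.mpr (Finset.mem_filter.mp (Finset.mem_coe.mp hx)).2)]
      refine Finset.sum_congr rfl fun i hi => ?_
      rw [← hfiber i]
      congr 1
      ext w
      simp only [Finset.mem_filter, Finset.mem_univ, true_and]
      exact ⟨fun h => h.2, fun h => ⟨h ▸ hi, h⟩⟩
    have hmemF : ∀ Q (v : V), v ∈ F Q → ∃ (hv : v ∈ ((↑S : Set V)ᶜ : Set V)),
        e (H.connectedComponentMk ⟨v, hv⟩) ∈ Q := by
      intro Q v hv
      rw [hF] at hv
      simp only [Finset.mem_image, Finset.mem_filter, Finset.mem_univ, true_and] at hv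
      obtain ⟨w, hw, rfl⟩ := hv
      exact ⟨w.2, hw⟩
    have hFdisj : Disjoint (F P) (F Q2) := by
      rw [Finset.disjoint_left]
      intro v hv1 hv2
      obtain ⟨h1, hi1⟩ := hmemF P v hv1
      obtain ⟨h2, hi2⟩ := hmemF Q2 v hv2
      exact Finset.disjoint_left.mp hdisj hi1 hi2
    have hFadj : ∀ a ∈ F P, ∀ b ∈ F Q2, ¬ G.Adj a b := by
      intro a ha b hb hadj
      obtain ⟨h1, hi1⟩ := hmemF P a ha
      obtain ⟨h2, hi2⟩ := hmemF Q2 b hb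
      have hHadj : H.Adj ⟨a, h1⟩ ⟨b, h2⟩ := hadj
      have : H.connectedComponentMk ⟨a, h1⟩ = H.connectedComponentMk ⟨b, h2⟩ :=
        ConnectedComponent.connectedComponentMk_eq_of_adj hHadj
      rw [this] at hi1
      exact Finset.disjoint_left.mp hdisj hi1 hi2
    -- shrink to size z+1
    obtain ⟨A, hAsub, hAcard⟩ := Finset.exists_subset_card_eq
      (show z + 1 ≤ (F P).card by rw [hFcard]; omega)
    obtain ⟨B, hBsub, hBcard⟩ := Finset.exists_subset_card_eq
      (show z + 1 ≤ (F Q2).card by rw [hFcard]; omega)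
    have hmem : z + 1 ∈ {z | ∃ A B : Finset V, A.card = z ∧ B.card = z ∧ Disjoint A B ∧
        ∀ a ∈ A, ∀ b ∈ B, ¬ G.Adj a b} :=
      ⟨A, B, hAcard, hBcard, hFdisj.mono hAsub hBsub,
        fun a ha b hb => hFadj a (hAsub ha) b (hBsub hb)⟩
    have hbdd : BddAbove {z | ∃ A B : Finset V, A.card = z ∧ B.card = z ∧ Disjoint A B ∧
        ∀ a ∈ A, ∀ b ∈ B, ¬ G.Adj a b} := by
      refine ⟨Fintype.card V, fun m hm => ?_⟩
      obtain ⟨A, B, hA, _, _, _⟩ := hm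
      rw [← hA]
      exact Finset.card_le_univ A
    have : z + 1 ≤ zParam G := le_csSup hbdd hmem
    omega
end
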